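/- arXiv:1510.07168 — 3 statements merged into one kernel-verified Lean document; each statement's English description precedes it below -/
import Mathlib

section
/- Let F : ℝ → ℝ be continuous and nonnegative, let ε > 0, and let u be continuously differentiable on an interval [y₁, y₂] with y₁ < y₂. Then ∫_{y₁}^{y₂} [ (ε/2)·u'(x)² + F(u(x))/ε ] dx ≥ √2 · ∫_{u(y₁)}^{u(y₂)} √(F(s)) ds. -/
open MeasureTheory intervalIntegral

/-! Pointwise, Young's inequality gives `(ε/2) u'² + F(u)/ε ≥ √2 · √(F(u)) · u'`, and the right-hand
side integrates to `√2 ∫_{u(y₁)}^{u(y₂)} √F` by the substitution `s = u(x)`. -/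

theorem sqrt_two_mul_sqrt_mul_le {ε : ℝ} (hε : 0 < ε) (a : ℝ) {b : ℝ} (hb : 0 ≤ b) :
    √2 * (√b * a) ≤ ε / 2 * a ^ 2 + b / ε := by
  have h2 : √2 ^ 2 = 2 := Real.sq_sqrt zero_le_two
  have hb' : √b ^ 2 = b := Real.sq_sqrt hb
  have hgap : ε / 2 * a ^ 2 + b / ε - √2 * (√b * a) = (ε * a - √2 * √b) ^ 2 / (2 * ε) := by
    field_simp
    linear_combination -√b ^ 2 * h2 - 2 * hb'
  have := div_nonneg (sq_nonneg (ε * a - √2 * √b)) (by positivity : (0 : ℝ) ≤ 2 * ε)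
  linarith

/-- Let `F : ℝ → ℝ` be continuous and nonnegative, `ε > 0`, and `u`
continuously differentiable on `[y₁, y₂]` (with derivative `u'`), `y₁ < y₂`. Then
`∫_{y₁}^{y₂} [(ε/2)·u'(x)² + F(u(x))/ε] dx ≥ √2 · ∫_{u(y₁)}^{u(y₂)} √(F s) ds`. -/
theorem energy_ge_sqrt2_int
    (F : ℝ → ℝ) (hF : Continuous F) (hFnn : ∀ s, 0 ≤ F s)
    (ε : ℝ) (hε : 0 < ε) (y₁ y₂ : ℝ) (hy : y₁ < y₂)
    (u u' : ℝ → ℝ)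
    (hu : ∀ x ∈ Set.Icc y₁ y₂, HasDerivAt u (u' x) x)
    (hu' : ContinuousOn u' (Set.Icc y₁ y₂)) :
    Real.sqrt 2 * (∫ s in (u y₁)..(u y₂), Real.sqrt (F s)) ≤
      ∫ x in y₁..y₂, (ε / 2) * (u' x) ^ 2 + F (u x) / ε := by
  rw [← Set.uIcc_of_le hy.le] at hu hu'
  have hu_cont : ContinuousOn u (Set.uIcc y₁ y₂) := fun x hx =>
    (hu x hx).continuousAt.continuousWithinAt
  rw [← integral_comp_mul_deriv hu hu' hF.sqrt, ← intervalIntegral.integral_const_mul]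
  refine integral_mono_on hy.le ?_ ?_ fun x _ => sqrt_two_mul_sqrt_mul_le hε (u' x) (hFnn (u x))
  · exact (continuousOn_const.mul
      ((hF.sqrt.comp_continuousOn hu_cont).mul hu')).intervalIntegrable
  · exact ((continuousOn_const.mul (hu'.pow 2)).add
      ((hF.comp_continuousOn hu_cont).div_const ε)).intervalIntegrable
end

section
/- Let F : ℝ → ℝ satisfy the standing assumptions and set c₀ := √2 ∫_{−1}^{1} √(F(s)) ds. Let a < b, ε > 0, N ≥ 1, and let u ∈ C¹([a,b]). Suppose there are points a ≤ z₀ < z₁ < ⋯ < z_N ≤ b at which u alternates between the values −1 and +1 (i.e. u(z_i) = (−1)^{i+σ} for all i and some fixed σ ∈ {0,1}). Then ∫_a^b [ (ε/2)·u'(x)² + F(u(x))/ε ] dx ≥ N·c₀. -/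
open MeasureTheory intervalIntegral

/-- Standing assumptions on the double-well potential `F`: `F` is `C³`, `F → +∞` at
infinity, `F(±1) = F'(±1) = 0`, `F''(±1) > 0`, and the only critical points with
nonpositive value are `±1`. -/
def StandingAssumptions (F : ℝ → ℝ) : Prop :=
  ContDiff ℝ 3 F ∧
  Filter.Tendsto F (Filter.cocompact ℝ) Filter.atTop ∧
  F (-1) = 0 ∧ F 1 = 0 ∧ deriv F (-1) = 0 ∧ deriv F 1 = 0 ∧
  0 < iteratedDeriv 2 F (-1) ∧ 0 < iteratedDeriv 2 F 1 ∧
  {u : ℝ | deriv F u = 0 ∧ F u ≤ 0} = {-1, 1}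

/-- The minimal energy `c₀ := √2 ∫_{-1}^{1} √(F s) ds` of one transition. -/
noncomputable def transitionEnergy (F : ℝ → ℝ) : ℝ :=
  Real.sqrt 2 * ∫ s in (-1 : ℝ)..1, Real.sqrt (F s)

/-! By AM–GM, `ε/2 u'² + F(u)/ε ≥ √(2F(u)) |u'|`, and `√(2F(u)) u'` is the derivative of
`Φ ∘ u` where `Φ' = √(2F)`. Hence on each interval between consecutive points `zᵢ`, across
which `u` passes from `±1` to `∓1`, the energy is at least `|Φ(1) - Φ(-1)| = c₀`; since
`F ≥ 0` the energy density is nonnegative, so the rest of `[a, b]` only adds to it. -/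

theorem StandingAssumptions.nonneg {F : ℝ → ℝ} (hF : StandingAssumptions F) (x : ℝ) :
    0 ≤ F x := by
  obtain ⟨hC, hlim, hFm1, hF1, -, -, -, -, hcrit⟩ := hF
  obtain ⟨m, hm⟩ := hC.continuous.exists_forall_le hlim
  suffices hm0 : F m = 0 from hm0 ▸ hm x
  have hmin : F m ≤ 0 := hF1 ▸ hm 1
  have hmcrit : m ∈ {u : ℝ | deriv F u = 0 ∧ F u ≤ 0} :=
    ⟨IsLocalMin.deriv_eq_zero (Filter.Eventually.of_forall hm), hmin⟩
  rw [hcrit] at hmcrit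
  rcases hmcrit with rfl | rfl
  exacts [hFm1, hF1]

theorem sqrt_two_mul_sqrt_mul_abs_le {ε q : ℝ} (hε : 0 < ε) (hq : 0 ≤ q) (p : ℝ) :
    Real.sqrt 2 * Real.sqrt q * |p| ≤ ε / 2 * p ^ 2 + q / ε := by
  have h2 := Real.sq_sqrt zero_le_two
  have hq' := Real.sq_sqrt hq
  have key : ε / 2 * p ^ 2 + q / ε - Real.sqrt 2 * Real.sqrt q * |p| =
      (Real.sqrt q - ε * Real.sqrt 2 * |p| / 2) ^ 2 / ε := by
    field_simp
    rw [← sq_abs p]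
    linear_combination (-ε ^ 2 * |p| ^ 2) * h2 - 4 * hq'
  rw [← sub_nonneg, key]
  positivity

theorem sum_integral_adjacent_intervals_fin {f : ℝ → ℝ} {μ : Measure ℝ} {N : ℕ}
    (z : Fin (N + 1) → ℝ) (hf : ∀ i j, IntervalIntegrable f μ (z i) (z j)) :
    ∑ i : Fin N, ∫ x in z i.castSucc..z i.succ, f x ∂μ = ∫ x in z 0..z (Fin.last N), f x ∂μ := by
  induction N with
  | zero => simp
  | succ N ih =>
    rw [Fin.sum_univ_castSucc]
    simp only [Fin.succ_castSucc]
    rw [ih (fun i => z i.castSucc) (fun i j => hf _ _)]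
    exact integral_add_adjacent_intervals (hf _ _) (hf _ _)

theorem abs_integral_sqrt_le_energy {F : ℝ → ℝ} (hF0 : ∀ y, 0 ≤ F y) (hFc : Continuous F)
    {ε : ℝ} (hε : 0 < ε) {u u' : ℝ → ℝ} {c d : ℝ} (hcd : c ≤ d)
    (hu : ∀ x ∈ Set.Icc c d, HasDerivAt u (u' x) x) (hu' : ContinuousOn u' (Set.Icc c d)) :
    |Real.sqrt 2 * ∫ y in u c..u d, Real.sqrt (F y)| ≤
      ∫ x in c..d, ε / 2 * (u' x) ^ 2 + F (u x) / ε := by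
  have hicc : Set.uIcc c d = Set.Icc c d := Set.uIcc_of_le hcd
  have hucont : ContinuousOn u (Set.Icc c d) := fun x hx =>
    (hu x hx).continuousAt.continuousWithinAt
  have hchange : ∫ y in u c..u d, Real.sqrt (F y) = ∫ x in c..d, u' x * Real.sqrt (F (u x)) :=
    (integral_deriv_smul_comp (hicc ▸ hu) (hicc ▸ hu') hFc.sqrt).symm
  have hint : IntervalIntegrable (fun x => ε / 2 * (u' x) ^ 2 + F (u x) / ε) volume c d :=
    (hicc ▸ ((continuousOn_const.mul (hu'.pow 2)).add
      ((hFc.comp_continuousOn hucont).div_const ε))).intervalIntegrable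
  rw [hchange, ← intervalIntegral.integral_const_mul, ← Real.norm_eq_abs]
  refine norm_integral_le_of_norm_le hcd (Filter.Eventually.of_forall fun x _ => ?_) hint
  calc ‖Real.sqrt 2 * (u' x * Real.sqrt (F (u x)))‖
      = Real.sqrt 2 * Real.sqrt (F (u x)) * |u' x| := by
        rw [Real.norm_eq_abs, abs_mul, abs_mul, abs_of_nonneg (Real.sqrt_nonneg 2),
          abs_of_nonneg (Real.sqrt_nonneg _)]
        ring
    _ ≤ ε / 2 * (u' x) ^ 2 + F (u x) / ε := sqrt_two_mul_sqrt_mul_abs_le hε (hF0 _) _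

theorem transitionEnergy_eq_abs_integral {F : ℝ → ℝ} {v : ℝ} (hv : v = 1 ∨ v = -1) :
    transitionEnergy F = |Real.sqrt 2 * ∫ y in v..-v, Real.sqrt (F y)| := by
  have hnonneg : 0 ≤ transitionEnergy F :=
    mul_nonneg (Real.sqrt_nonneg 2)
      (integral_nonneg (by norm_num) fun y _ => Real.sqrt_nonneg (F y))
  rcases hv with rfl | rfl
  · rw [integral_symm, mul_neg, abs_neg]
    exact (abs_of_nonneg hnonneg).symm
  · rw [neg_neg]
    exact (abs_of_nonneg hnonneg).symm

theorem transitionEnergy_le_energy {F : ℝ → ℝ} (hF0 : ∀ y, 0 ≤ F y) (hFc : Continuous F)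
    {ε : ℝ} (hε : 0 < ε) {u u' : ℝ → ℝ} {c d : ℝ} (hcd : c ≤ d)
    (hu : ∀ x ∈ Set.Icc c d, HasDerivAt u (u' x) x) (hu' : ContinuousOn u' (Set.Icc c d))
    (hc : u c = 1 ∨ u c = -1) (hd : u d = -u c) :
    transitionEnergy F ≤ ∫ x in c..d, ε / 2 * (u' x) ^ 2 + F (u x) / ε := by
  rw [transitionEnergy_eq_abs_integral hc, ← hd]
  exact abs_integral_sqrt_le_energy hF0 hFc hε hcd hu hu'

theorem energy_lower_bound_N_transitions_general
    (F : ℝ → ℝ) (hF : StandingAssumptions F)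
    (a b ε : ℝ) (hε : 0 < ε)
    (N : ℕ)
    (u u' : ℝ → ℝ)
    (hu : ∀ x ∈ Set.Icc a b, HasDerivAt u (u' x) x)
    (hu' : ContinuousOn u' (Set.Icc a b))
    (z : Fin (N + 1) → ℝ) (hz : StrictMono z)
    (hza : a ≤ z 0) (hzb : z (Fin.last N) ≤ b)
    (σ : ℕ)
    (hvals : ∀ i : Fin (N + 1), u (z i) = (-1 : ℝ) ^ ((i : ℕ) + σ)) :
    (N : ℝ) * transitionEnergy F ≤
      ∫ x in a..b, ε / 2 * (u' x) ^ 2 + F (u x) / ε := by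
  set e : ℝ → ℝ := fun x => ε / 2 * (u' x) ^ 2 + F (u x) / ε
  have hFc : Continuous F := hF.1.continuous
  have he_nonneg (x : ℝ) : 0 ≤ e x := by
    have := hF.nonneg (u x)
    positivity
  have he_cont : ContinuousOn e (Set.Icc a b) :=
    (continuousOn_const.mul (hu'.pow 2)).add ((hFc.comp_continuousOn
      fun x hx => (hu x hx).continuousAt.continuousWithinAt).div_const ε)
  have hz_mem (i : Fin (N + 1)) : z i ∈ Set.Icc a b :=
    ⟨hza.trans (hz.monotone (Fin.zero_le i)), (hz.monotone (Fin.le_last i)).trans hzb⟩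
  have he_int {c d : ℝ} (hc : c ∈ Set.Icc a b) (hd : d ∈ Set.Icc a b) :
      IntervalIntegrable e volume c d :=
    (he_cont.mono (Set.uIcc_subset_Icc hc hd)).intervalIntegrable
  have htransition (i : Fin N) : transitionEnergy F ≤ ∫ x in z i.castSucc..z i.succ, e x := by
    have hsub := Set.Icc_subset_Icc (hz_mem i.castSucc).1 (hz_mem i.succ).2
    have hflip : u (z i.succ) = -u (z i.castSucc) := by
      rw [hvals, hvals, Fin.val_succ, Fin.val_castSucc, add_right_comm, pow_succ, mul_neg_one]
    exact transitionEnergy_le_energy hF.nonneg hFc hε (hz Fin.castSucc_lt_succ).le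
      (fun x hx => hu x (hsub hx)) (hu'.mono hsub) (hvals _ ▸ neg_one_pow_eq_or ℝ _) hflip
  have hab : a ≤ b := hza.trans (hz_mem 0).2
  calc (N : ℝ) * transitionEnergy F = ∑ _i : Fin N, transitionEnergy F := by simp
    _ ≤ ∑ i : Fin N, ∫ x in z i.castSucc..z i.succ, e x :=
      Finset.sum_le_sum fun i _ => htransition i
    _ = ∫ x in z 0..z (Fin.last N), e x :=
      sum_integral_adjacent_intervals_fin z fun i j => he_int (hz_mem i) (hz_mem j)
    _ ≤ ∫ x in a..b, e x :=
      integral_mono_interval hza (hz.monotone (Fin.zero_le _)) hzb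
        (Filter.Eventually.of_forall he_nonneg) (he_int ⟨le_rfl, hab⟩ ⟨hab, le_rfl⟩)

/-- If `u ∈ C¹([a,b])` takes alternately the values `-1` and `+1`
at `N+1` ordered points of `[a,b]`, then its Allen–Cahn energy is at least `N·c₀`. -/
theorem energy_lower_bound_N_transitions
    (F : ℝ → ℝ) (hF : StandingAssumptions F)
    (a b ε : ℝ) (hab : a < b) (hε : 0 < ε)
    (N : ℕ) (hN : 1 ≤ N)
    (u u' : ℝ → ℝ)
    (hu : ∀ x ∈ Set.Icc a b, HasDerivAt u (u' x) x)
    (hu' : ContinuousOn u' (Set.Icc a b))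
    (z : Fin (N + 1) → ℝ) (hz : StrictMono z)
    (hza : a ≤ z 0) (hzb : z (Fin.last N) ≤ b)
    (σ : ℕ) (hσ : σ = 0 ∨ σ = 1)
    (hvals : ∀ i : Fin (N + 1), u (z i) = (-1 : ℝ) ^ ((i : ℕ) + σ)) :
    (N : ℝ) * transitionEnergy F ≤
      ∫ x in a..b, ε / 2 * (u' x) ^ 2 + F (u x) / ε :=
  energy_lower_bound_N_transitions_general F hF a b ε hε N u u' hu hu' z hz hza hzb σ hvals
end

section
/- Let a < 0 < b and define φ^ε(x) := tanh(x/(√2·ε)) for ε > 0. Then lim_{ε→0} ∫_a^b [ (ε/2)·(φ^ε)'(x)² + (1/(4ε))·(φ^ε(x)² − 1)² ] dx = 2√2/3. -/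
/-!
Along the standing wave `φ = tanh (x / (√2 ε))` one has `ε φ' = (1 - φ²) / √2 = √(2 F(φ))`, so the
gradient and potential terms of the energy density coincide and their sum is `(H ∘ φ)'` with
`H' = √(2 F)`. The energy on `[a, b]` is therefore `H (φ b) - H (φ a)`, and as `ε → 0⁺` the wave
saturates to `±1` at the endpoints, giving `H 1 - H (-1) = 2√2/3`.
-/

open Filter MeasureTheory intervalIntegral Topology

namespace Real

theorem hasDerivAt_tanh (x : ℝ) : HasDerivAt tanh (1 - tanh x ^ 2) x := by
  have h := (hasDerivAt_sinh x).div (hasDerivAt_cosh x) (cosh_pos x).ne'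
  rw [show sinh / cosh = tanh from funext fun y => (tanh_eq_sinh_div_cosh y).symm] at h
  refine h.congr_deriv ?_
  rw [tanh_eq_sinh_div_cosh]
  field_simp

@[fun_prop]
theorem continuous_tanh : Continuous tanh :=
  continuous_iff_continuousAt.2 fun x => (hasDerivAt_tanh x).continuousAt

theorem tanh_eq_one_sub_two_div (x : ℝ) : tanh x = 1 - 2 / (exp (2 * x) + 1) := by
  have h : exp (2 * x) = exp x ^ 2 := by rw [← exp_nat_mul]; ring_nf
  rw [tanh_eq, exp_neg, h]
  have := exp_pos x
  field_simp
  ring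

theorem tendsto_tanh_atTop : Tendsto tanh atTop (𝓝 1) := by
  have h : Tendsto (fun x : ℝ => exp (2 * x) + 1) atTop atTop :=
    tendsto_atTop_add_const_right _ _ (tendsto_exp_atTop.comp (tendsto_id.const_mul_atTop two_pos))
  simpa [← tanh_eq_one_sub_two_div] using (h.const_div_atTop 2).const_sub 1

theorem tendsto_tanh_atBot : Tendsto tanh atBot (𝓝 (-1)) := by
  simpa [Function.comp_def] using (tendsto_tanh_atTop.comp tendsto_neg_atBot_atTop).neg

end Real

/-- `∫₀ᵗ √(2 F(s)) ds` for `|t| ≤ 1`, where `F(u) = (u² - 1)² / 4`. -/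
noncomputable def modicaMortolaPrimitive (t : ℝ) : ℝ := √2 / 2 * (t - t ^ 3 / 3)

theorem hasDerivAt_modicaMortolaPrimitive (t : ℝ) :
    HasDerivAt modicaMortolaPrimitive (√2 / 2 * (1 - t ^ 2)) t := by
  have h := ((hasDerivAt_id t).sub ((hasDerivAt_pow 3 t).div_const 3)).const_mul (√2 / 2)
  exact h.congr_deriv (by simp)

theorem continuous_modicaMortolaPrimitive : Continuous modicaMortolaPrimitive := by
  unfold modicaMortolaPrimitive; fun_prop

theorem modicaMortolaPrimitive_one_sub_neg_one :
    modicaMortolaPrimitive 1 - modicaMortolaPrimitive (-1) = 2 * √2 / 3 := by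
  unfold modicaMortolaPrimitive; ring

theorem hasDerivAt_tanh_div (c x : ℝ) :
    HasDerivAt (fun y => Real.tanh (y / c)) ((1 - Real.tanh (x / c) ^ 2) / c) x := by
  have h := (Real.hasDerivAt_tanh (x / c)).comp x ((hasDerivAt_id x).div_const c)
  exact h.congr_deriv (by simp [div_eq_mul_inv])

theorem energy_density_equipartition {ε : ℝ} (hε : ε ≠ 0) (t : ℝ) :
    ε / 2 * ((1 - t ^ 2) / (√2 * ε)) ^ 2 + 1 / (4 * ε) * (t ^ 2 - 1) ^ 2
      = √2 / 2 * (1 - t ^ 2) * ((1 - t ^ 2) / (√2 * ε)) := by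
  have hs : √2 ^ 2 = 2 := Real.sq_sqrt zero_le_two
  field_simp
  rw [hs]
  ring

theorem integral_tanh_energy (a b : ℝ) {ε : ℝ} (hε : ε ≠ 0) :
    ∫ x in a..b,
        ε / 2 * (deriv (fun y : ℝ => Real.tanh (y / (√2 * ε))) x) ^ 2
          + 1 / (4 * ε) * ((Real.tanh (x / (√2 * ε))) ^ 2 - 1) ^ 2
      = modicaMortolaPrimitive (Real.tanh (b / (√2 * ε)))
        - modicaMortolaPrimitive (Real.tanh (a / (√2 * ε))) := by
  simp only [fun x => (hasDerivAt_tanh_div (√2 * ε) x).deriv, energy_density_equipartition hε]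
  refine integral_eq_sub_of_hasDerivAt (fun x _ =>
    (hasDerivAt_modicaMortolaPrimitive _).comp x (hasDerivAt_tanh_div (√2 * ε) x)) ?_
  apply Continuous.intervalIntegrable
  fun_prop

theorem tendsto_tanh_div_mul_nhdsGT_zero_of_pos {c x : ℝ} (hc : 0 < c) (hx : 0 < x) :
    Tendsto (fun ε => Real.tanh (x / (c * ε))) (𝓝[>] 0) (𝓝 1) := by
  refine Real.tendsto_tanh_atTop.comp ?_
  refine (tendsto_inv_nhdsGT_zero.const_mul_atTop (div_pos hx hc)).congr fun ε => ?_
  rw [div_mul_eq_div_div, div_eq_mul_inv (x / c)]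

theorem tendsto_tanh_div_mul_nhdsGT_zero_of_neg {c x : ℝ} (hc : 0 < c) (hx : x < 0) :
    Tendsto (fun ε => Real.tanh (x / (c * ε))) (𝓝[>] 0) (𝓝 (-1)) := by
  refine Real.tendsto_tanh_atBot.comp ?_
  refine (tendsto_inv_nhdsGT_zero.const_mul_atTop_of_neg (div_neg_of_neg_of_pos hx hc)).congr
    fun ε => ?_
  rw [div_mul_eq_div_div, div_eq_mul_inv (x / c)]

/-- For `a < 0 < b`, the Allen–Cahn energy of the standing wave
`φ^ε(x) := tanh (x/(√2 ε))`, with potential `F(u) = (1/4)(u²-1)²`, converges to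
`2√2/3` as `ε → 0⁺`. -/
theorem tanh_energy_limit (a b : ℝ) (ha : a < 0) (hb : 0 < b) :
    Tendsto
      (fun ε : ℝ =>
        ∫ x in a..b,
          ε / 2 * (deriv (fun y : ℝ => Real.tanh (y / (Real.sqrt 2 * ε))) x) ^ 2
            + 1 / (4 * ε) * ((Real.tanh (x / (Real.sqrt 2 * ε))) ^ 2 - 1) ^ 2)
      (nhdsWithin 0 (Set.Ioi 0)) (nhds (2 * Real.sqrt 2 / 3)) := by
  have hs : (0 : ℝ) < √2 := by positivity
  have hH := continuous_modicaMortolaPrimitive.tendsto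
  have hlim := ((hH 1).comp (tendsto_tanh_div_mul_nhdsGT_zero_of_pos hs hb)).sub
    ((hH (-1)).comp (tendsto_tanh_div_mul_nhdsGT_zero_of_neg hs ha))
  rw [modicaMortolaPrimitive_one_sub_neg_one] at hlim
  refine hlim.congr' ?_
  filter_upwards [self_mem_nhdsWithin] with ε hε
  exact (integral_tanh_energy a b (ne_of_gt hε)).symm
end
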